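/- Let G be a finite simple graph in which every connected component has maximum degree at least two. Then ∂_s(G) ≥ β(G)/2, i.e., 2·∂_s(G) ≥ β(G), where β(G) is the vertex cover number of G. -/

import Mathlib

/-!
Among the minimum vertex covers choose one, `C`, of largest degree sum. Minimality gives every
`c ∈ C` a neighbour outside `C`, and a leaf of `C` could be traded for its neighbour, which is
not a leaf because no component is a single edge; so every vertex of `C` has degree at least two.
A maximum cut of `G[C]` has a side `Z` with `2|Z| ≥ |C|` in which every vertex with a neighbour
in `C` has one in `C \ Z`. Hence every vertex of `Z` has at least two neighbours outside `Z`,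
so for `D = V \ Z` we get `N_e(D) = Z` and `D_w = ∅`, i.e. `∂ₛ(D) = |Z| ≥ β(G)/2`.
-/


open Finset

namespace StrongDifferential

variable {V : Type*} [Fintype V] [DecidableEq V] (G : SimpleGraph V) [DecidableRel G.Adj]

/-- The external neighbourhood `N_e(D)` of a set `D`: vertices outside `D`
with a neighbour in `D`. -/
def extNbhd (D : Finset V) : Finset V :=
  univ.filter fun u => u ∉ D ∧ ∃ v ∈ D, G.Adj u v

/-- The external private neighbourhood `epn(v, D)` of `v` with respect to `D`. -/
def epn (v : V) (D : Finset V) : Finset V :=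
  univ.filter fun u => u ∉ D ∧ G.neighborFinset u ∩ D = {v}

/-- `D_w`: the vertices of `D` having a nonempty external private neighbourhood. -/
def weak (D : Finset V) : Finset V :=
  D.filter fun v => (epn G v D).Nonempty

/-- `D_s = D \ D_w`. -/
def strong (D : Finset V) : Finset V :=
  D \ weak G D

/-- The strong differential `∂ₛ(D) = |N_e(D)| - |D_w|` of a set `D`. -/
def sdiffSet (D : Finset V) : ℤ :=
  (extNbhd G D).card - (weak G D).card

/-- The strong differential `∂ₛ(G) = max {∂ₛ(D) : D ⊆ V(G)}` of the graph `G`. -/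
def sdiff : ℤ :=
  (univ : Finset V).powerset.sup' ⟨∅, empty_mem_powerset _⟩ (sdiffSet G)

/-- The differential `∂(D) = |N_e(D)| - |D|` of a set `D`. -/
def diffSet (D : Finset V) : ℤ :=
  (extNbhd G D).card - D.card

/-- The differential `∂(G) = max {∂(D) : D ⊆ V(G)}` of the graph `G`. -/
def gdiff : ℤ :=
  (univ : Finset V).powerset.sup' ⟨∅, empty_mem_powerset _⟩ (diffSet G)

/-- A dominating set: every vertex outside `D` has a neighbour in `D`. -/
def IsDomSet (D : Finset V) : Prop :=
  ∀ v, v ∉ D → ∃ u ∈ D, G.Adj v u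

/-- The domination number `γ(G)`. -/
noncomputable def gamma : ℕ :=
  sInf {k | ∃ D : Finset V, IsDomSet G D ∧ D.card = k}

/-- A 2-dominating set: every vertex outside `D` has at least two neighbours in `D`. -/
def Is2DomSet (D : Finset V) : Prop :=
  ∀ v, v ∉ D → 2 ≤ (G.neighborFinset v ∩ D).card

/-- The 2-domination number `γ₂(G)`. -/
noncomputable def gamma2 : ℕ :=
  sInf {k | ∃ D : Finset V, Is2DomSet G D ∧ D.card = k}

/-- An Italian dominating function: `f : V → {0,1,2}` such that every
vertex of weight `0` has total weight at least `2` on its neighbourhood. -/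
def IsIDF (f : V → ℕ) : Prop :=
  (∀ v, f v ≤ 2) ∧ ∀ v, f v = 0 → 2 ≤ ∑ u ∈ G.neighborFinset v, f u

/-- The Italian domination number `γ_I(G)`. -/
noncomputable def italian : ℕ :=
  sInf {k | ∃ f : V → ℕ, IsIDF G f ∧ ∑ v, f v = k}

/-- `σ(G)`: the number of vertices adjacent to at least two leaves. -/
def sigmaSupp : ℕ :=
  (univ.filter fun v => 2 ≤ ((G.neighborFinset v).filter fun u => G.degree u = 1).card).card

/-- The independence number `α(G)`. -/
noncomputable def indepNum : ℕ :=
  sSup {k | ∃ S : Finset V, (∀ u ∈ S, ∀ w ∈ S, u ≠ w → ¬ G.Adj u w) ∧ S.card = k}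

/-- The vertex cover number `β(G)`. -/
noncomputable def vcNum : ℕ :=
  sInf {k | ∃ S : Finset V, (∀ u v, G.Adj u v → u ∈ S ∨ v ∈ S) ∧ S.card = k}

/-- A semitotal dominating set: a dominating set in which every vertex is
within distance two of another vertex of the set. -/
def IsSemitotalDomSet (D : Finset V) : Prop :=
  IsDomSet G D ∧ ∀ v ∈ D, ∃ u ∈ D, u ≠ v ∧ (G.Adj v u ∨ ∃ w, G.Adj v w ∧ G.Adj w u)

/-- The semitotal domination number `γ_{t2}(G)`. -/
noncomputable def gammaT2 : ℕ :=
  sInf {k | ∃ D : Finset V, IsSemitotalDomSet G D ∧ D.card = k}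

end StrongDifferential

open scoped symmDiff

namespace SimpleGraph

variable {V : Type*} {G : SimpleGraph V}

theorem Reachable.mem_of_forall_adj_mem {s : Set V}
    (hs : ∀ x ∈ s, ∀ y, G.Adj x y → y ∈ s) {u v : V} (huv : G.Reachable u v) (hu : u ∈ s) :
    v ∈ s := by
  rw [reachable_iff_reflTransGen] at huv
  induction huv with
  | refl => exact hu
  | tail _ hxy ih => exact hs _ ih _ hxy

theorem IsVertexCover.diff_singleton {s : Set V} (hs : G.IsVertexCover s) {c : V}
    (hc : ∀ a, G.Adj c a → a ∈ s) : G.IsVertexCover (s \ {c}) := by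
  intro u v huv
  grind [IsVertexCover, Adj.ne, Adj.symm]

theorem IsVertexCover.insert_diff_singleton {s : Set V} (hs : G.IsVertexCover s) {c a : V}
    (hc : ∀ b, G.Adj c b → b = a) : G.IsVertexCover (insert a (s \ {c})) := by
  intro u v huv
  grind [IsVertexCover, Adj.symm]

variable [Fintype V] [DecidableRel G.Adj]

theorem two_le_degree_of_adj_of_degree_eq_one
    (h : ∀ v : V, ∃ u : V, G.Reachable v u ∧ 2 ≤ G.degree u) {c a : V} (hca : G.Adj c a)
    (hc : G.degree c = 1) : 2 ≤ G.degree a := by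
  by_contra! hlt
  have ha : G.degree a = 1 := by
    have := G.degree_pos_iff_exists_adj a |>.2 ⟨c, hca.symm⟩
    omega
  obtain ⟨u, hcu, hu⟩ := h c
  have hclosed : ∀ x ∈ ({c, a} : Set V), ∀ y, G.Adj x y → y ∈ ({c, a} : Set V) := by
    rintro x (rfl | rfl) y hxy
    · exact .inr (degree_eq_one_iff_existsUnique_adj.1 hc |>.unique hxy hca)
    · exact .inl (degree_eq_one_iff_existsUnique_adj.1 ha |>.unique hxy hca.symm)
  rcases hcu.mem_of_forall_adj_mem hclosed (.inl rfl) with rfl | rfl <;> omega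

variable (G) [DecidableEq V]

theorem exists_cut_forall_exists_adj_across (W : Finset V) :
    ∃ X : Finset V, ∀ x ∈ W, (∃ y ∈ W, G.Adj x y) → ∃ y ∈ W, G.Adj x y ∧ (x ∈ X ↔ y ∉ X) := by
  let cut : Finset V → Finset (V × V) := fun X =>
    (W ×ˢ W).filter fun p => G.Adj p.1 p.2 ∧ (p.1 ∈ X ↔ p.2 ∉ X)
  obtain ⟨X, -, hX⟩ := exists_max_image univ (fun X => #(cut X)) univ_nonempty
  refine ⟨X, fun x hx ⟨y, hy, hxy⟩ => ?_⟩
  by_contra! hno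
  -- `X` maximizes the cut; moving `x` to the other side keeps every cut pair and adds `(x, y)`
  have hsub : cut X ⊆ cut (X ∆ {x}) := by
    intro p hp
    simp only [cut, mem_filter, mem_product, mem_symmDiff, mem_singleton] at hp ⊢
    grind [Adj.symm]
  have hnew : (x, y) ∈ cut (X ∆ {x}) ∧ (x, y) ∉ cut X := by
    simp only [cut, mem_filter, mem_product, mem_symmDiff, mem_singleton]
    grind [Adj.ne]
  have hlt := card_lt_card (ssubset_iff_of_subset hsub |>.2 ⟨_, hnew⟩)
  exact hlt.not_ge (hX _ (mem_univ _))

theorem exists_subset_two_mul_card_ge_forall_exists_adj_sdiff (W : Finset V) :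
    ∃ Z ⊆ W, #W ≤ 2 * #Z ∧ ∀ z ∈ Z, (∃ y ∈ W, G.Adj z y) → ∃ y ∈ W \ Z, G.Adj z y := by
  obtain ⟨X, hX⟩ := G.exists_cut_forall_exists_adj_across W
  have hcard := card_inter_add_card_sdiff W X
  by_cases hbig : #W ≤ 2 * #(W ∩ X)
  · refine ⟨W ∩ X, inter_subset_left, hbig, fun z hz hzW => ?_⟩
    obtain ⟨y, hy, hzy, hyX⟩ := hX z (mem_inter.1 hz).1 hzW
    exact ⟨y, by simp_all, hzy⟩
  · refine ⟨W \ X, sdiff_subset, by omega, fun z hz hzW => ?_⟩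
    obtain ⟨y, hy, hzy, hyX⟩ := hX z (mem_sdiff.1 hz).1 hzW
    exact ⟨y, by simp_all, hzy⟩

end SimpleGraph

namespace StrongDifferential

open SimpleGraph

variable {V : Type*} (G : SimpleGraph V)

theorem vcNum_le {C : Finset V} (hC : G.IsVertexCover C) : vcNum G ≤ #C :=
  Nat.sInf_le ⟨C, fun _ _ huv => hC huv, rfl⟩

theorem exists_isVertexCover_card_eq_vcNum [Fintype V] :
    ∃ C : Finset V, G.IsVertexCover C ∧ #C = vcNum G := by
  obtain ⟨C, hC, hcard⟩ := Nat.sInf_mem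
    (s := {k | ∃ S : Finset V, (∀ u v, G.Adj u v → u ∈ S ∨ v ∈ S) ∧ S.card = k})
    ⟨_, univ, fun u _ _ => .inl (mem_univ u), rfl⟩
  exact ⟨C, fun u v => hC u v, hcard⟩

theorem exists_adj_notMem_of_card_eq_vcNum [DecidableEq V] {C : Finset V}
    (hC : G.IsVertexCover C) (hcard : #C = vcNum G) {c : V} (hc : c ∈ C) : ∃ a ∉ C, G.Adj c a := by
  by_contra! hno
  have hle := vcNum_le G (C := C.erase c) (by
    rw [coe_erase]
    exact hC.diff_singleton fun a hca => by_contra fun haC => hno a haC hca)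
  have hpos := card_pos.2 ⟨c, hc⟩
  rw [card_erase_of_mem hc] at hle
  omega

variable [Fintype V] [DecidableEq V] [DecidableRel G.Adj]

theorem exists_isVertexCover_card_eq_vcNum_forall_two_le_degree
    (h : ∀ v : V, ∃ u : V, G.Reachable v u ∧ 2 ≤ G.degree u) :
    ∃ C : Finset V, G.IsVertexCover C ∧ #C = vcNum G ∧ ∀ c ∈ C, 2 ≤ G.degree c := by
  classical
  obtain ⟨C₀, hC₀⟩ := exists_isVertexCover_card_eq_vcNum G
  obtain ⟨C, hC, hC_max⟩ :=
    exists_max_image (univ.filter fun C : Finset V => G.IsVertexCover ↑C ∧ #C = vcNum G)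
      (fun C => ∑ c ∈ C, G.degree c) ⟨C₀, mem_filter.2 ⟨mem_univ _, hC₀⟩⟩
  rw [mem_filter] at hC
  refine ⟨C, hC.2.1, hC.2.2, fun c hc => ?_⟩
  obtain ⟨a, haC, hca⟩ := exists_adj_notMem_of_card_eq_vcNum G hC.2.1 hC.2.2 hc
  have hpos := (G.degree_pos_iff_exists_adj c).2 ⟨a, hca⟩
  by_contra! hlt
  have hc₁ : G.degree c = 1 := by omega
  -- trading the leaf `c` for its neighbour `a` would give a minimum cover of larger degree sum
  have ha := two_le_degree_of_adj_of_degree_eq_one h hca hc₁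
  have haC' : a ∉ C.erase c := fun h => haC (mem_of_mem_erase h)
  have hC' : G.IsVertexCover ↑(insert a (C.erase c)) := by
    rw [coe_insert, coe_erase]
    exact hC.2.1.insert_diff_singleton fun b hcb =>
      (degree_eq_one_iff_existsUnique_adj.1 hc₁).unique hcb hca
  have hcard : #(insert a (C.erase c)) = vcNum G := by
    rw [card_insert_of_notMem haC', card_erase_of_mem hc, ← hC.2.2]
    have := card_pos.2 ⟨c, hc⟩
    omega
  have hsum := hC_max _ (mem_filter.2 ⟨mem_univ _, hC', hcard⟩)
  rw [sum_insert haC', ← sum_erase_add C _ hc, hc₁] at hsum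
  omega

theorem sdiffSet_le_sdiff (D : Finset V) : sdiffSet G D ≤ sdiff G :=
  le_sup' (sdiffSet G) (mem_powerset.2 (subset_univ D))

theorem extNbhd_compl {Z : Finset V} (hZ : ∀ z ∈ Z, (G.neighborFinset z \ Z).Nonempty) :
    extNbhd G Zᶜ = Z := by
  ext u
  simp only [extNbhd, mem_filter, mem_univ, true_and, mem_compl, not_not, and_iff_left_iff_imp]
  intro hu
  obtain ⟨v, hv⟩ := hZ u hu
  rw [mem_sdiff, mem_neighborFinset] at hv
  exact ⟨v, hv.2, hv.1⟩

theorem weak_compl_eq_empty {Z : Finset V} (hZ : ∀ z ∈ Z, 1 < #(G.neighborFinset z \ Z)) :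
    weak G Zᶜ = ∅ := by
  refine filter_false_of_mem fun v _ ⟨u, hu⟩ => ?_
  rw [epn, mem_filter, mem_compl, not_not, ← sdiff_eq_inter_compl] at hu
  have := hZ u hu.2.1
  rw [hu.2.2, card_singleton] at this
  omega

theorem sdiffSet_compl {Z : Finset V} (hZ : ∀ z ∈ Z, 1 < #(G.neighborFinset z \ Z)) :
    sdiffSet G Zᶜ = #Z := by
  rw [sdiffSet, extNbhd_compl G fun z hz => card_pos.1 (by linarith [hZ z hz]),
    weak_compl_eq_empty G hZ, card_empty, Nat.cast_zero, sub_zero]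

theorem stmt_18 {V : Type*} [Fintype V] [DecidableEq V] (G : SimpleGraph V)
    [DecidableRel G.Adj] (h : ∀ v : V, ∃ u : V, G.Reachable v u ∧ 2 ≤ G.degree u) :
    (vcNum G : ℤ) ≤ 2 * sdiff G := by
  obtain ⟨C, hC, hCcard, hdeg⟩ := exists_isVertexCover_card_eq_vcNum_forall_two_le_degree G h
  obtain ⟨Z, hZC, hCZ, hZ⟩ := G.exists_subset_two_mul_card_ge_forall_exists_adj_sdiff C
  have hZout : ∀ z ∈ Z, 1 < #(G.neighborFinset z \ Z) := by
    intro z hz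
    obtain ⟨a, haC, hza⟩ := exists_adj_notMem_of_card_eq_vcNum G hC hCcard (hZC hz)
    by_cases hzC : ∃ y ∈ C, G.Adj z y
    · obtain ⟨s, hs, hzs⟩ := hZ z hz hzC
      rw [mem_sdiff] at hs
      exact one_lt_card.2
        ⟨a, mem_sdiff.2 ⟨(mem_neighborFinset _ _ _).2 hza, fun haZ => haC (hZC haZ)⟩,
        s, mem_sdiff.2 ⟨(mem_neighborFinset _ _ _).2 hzs, hs.2⟩, fun has => haC (has ▸ hs.1)⟩
    · have hsub : G.neighborFinset z ⊆ G.neighborFinset z \ Z := fun y hy =>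
        mem_sdiff.2 ⟨hy, fun hyZ => hzC ⟨y, hZC hyZ, (mem_neighborFinset _ _ _).1 hy⟩⟩
      exact (hdeg z (hZC hz)).trans (card_le_card hsub)
  have hZsdiff := sdiffSet_compl G hZout ▸ sdiffSet_le_sdiff G Zᶜ
  omega

end StrongDifferential
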